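/- Let V₃ be the digraph on vertices {1,2,3} with arcs (1,2) and (3,2) (the orientation of the path on three vertices whose middle vertex is a sink), and let N₄ be the digraph on vertices {1,2,3,4} with arcs (2,1), (2,3) and (4,3) (the anti-directed path on four vertices). Let D be any finite digraph, and let D' be obtained from D by adding, for each vertex v of D, a disjoint new copy N₄^v of N₄ together with all arcs (v,u) for u a vertex of N₄^v. Then D admits a V₃-free 2-coloring if and only if D' admits an N₄-free 2-coloring. Moreover, D' is acyclic if and only if D is acyclic. -/

import Mathlib

/-- A simple digraph on vertex type `V`: no loops and no anti-parallel arcs. -/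
structure Digraph' (V : Type*) : Type _ where
  Adj : V → V → Prop
  loopless : ∀ v, ¬ Adj v v
  asymm : ∀ u v, Adj u v → ¬ Adj v u

/-- An induced copy of the digraph `F` in the digraph `D`, given by the embedding `φ`. -/
def IsInducedCopy {α β : Type*} (F : Digraph' α) (D : Digraph' β) (φ : α → β) : Prop :=
  Function.Injective φ ∧ ∀ u v : α, D.Adj (φ u) (φ v) ↔ F.Adj u v

/-- The image of `φ` is monochromatic under the coloring `c`. -/
def Monochromatic {α β : Type*} {k : ℕ} (c : β → Fin k) (φ : α → β) : Prop :=
  ∃ i : Fin k, ∀ u : α, c (φ u) = i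

/-- The coloring `c` of `D` is `F`-free: no induced copy of `F` in `D` is monochromatic. -/
def IsFFreeColoring {α β : Type*} (F : Digraph' α) (D : Digraph' β) {k : ℕ}
    (c : β → Fin k) : Prop :=
  ∀ φ : α → β, IsInducedCopy F D φ → ¬ Monochromatic c φ

/-- A digraph is acyclic if it contains no directed cycle. -/
def Digraph'.Acyclic {β : Type*} (D : Digraph' β) : Prop :=
  ∀ v : β, ¬ Relation.TransGen D.Adj v v

/-- The underlying simple graph of a digraph. -/
def Digraph'.underlying {V : Type*} (D : Digraph' V) : SimpleGraph V where
  Adj u v := D.Adj u v ∨ D.Adj v u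
  symm := ⟨by intro _ _ h; exact Or.symm h⟩
  loopless := ⟨by intro v h; exact h.elim (D.loopless v) (D.loopless v)⟩

/-- The orientation of the path on three vertices `0, 1, 2` whose middle vertex `1` is a
sink: arcs `(0, 1)` and `(2, 1)` (vertices `1,2,3` of the statement are `0,1,2` here). -/
def V3sink : Digraph' (Fin 3) where
  Adj u v := (u = 0 ∧ v = 1) ∨ (u = 2 ∧ v = 1)
  loopless := by decide
  asymm := by decide

/-- The anti-directed path on four vertices `0, 1, 2, 3` with arcs `(1, 0)`, `(1, 2)` and
`(3, 2)` (vertices `1,2,3,4` of the statement are `0,1,2,3` here). -/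
def N4 : Digraph' (Fin 4) where
  Adj u v := (u = 1 ∧ v = 0) ∨ (u = 1 ∧ v = 2) ∨ (u = 3 ∧ v = 2)
  loopless := by decide
  asymm := by decide

/-- The arc relation of the digraph `D'` obtained from `D` by adding, for each vertex `v` of
`D`, a disjoint copy of `O` together with all arcs `(v, u)` for `u` a vertex of that copy. -/
def attachPlusRel {V ω : Type*} (D : Digraph' V) (O : Digraph' ω) :
    (V ⊕ (V × ω)) → (V ⊕ (V × ω)) → Prop
  | Sum.inl u, Sum.inl v => D.Adj u v
  | Sum.inl v, Sum.inr (w, _) => v = w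
  | Sum.inr _, Sum.inl _ => False
  | Sum.inr (v, u), Sum.inr (v', u') => v = v' ∧ O.Adj u u'


/-!
In `D'` every vertex `v` of `D` dominates its whole gadget `N₄^v`. Let `c` be an `N₄`-free
2-coloring of `D'`. If `x → y ← z` were a monochromatic induced `V₃` in `D`, the gadget of `x`,
itself an induced `N₄`, would contain a vertex `g` of the color of `x, y, z`, and
`g ← x → y ← z` would be a monochromatic induced `N₄`.

Conversely, extend a `V₃`-free coloring of `D` by coloring every gadget non-monochromatically.
In an induced `N₄` with arcs `1 → 0`, `1 → 2`, `3 → 2`, the vertices `1, 3` are distinct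
non-adjacent in-neighbours of `2`. If `2` lies in a gadget, this forces `1` and `3`, and then `0`,
into the same gadget (its owner is adjacent to all of it), so the copy is the whole gadget.
Otherwise no arc leaves a gadget, so `1, 2, 3` form an induced `V₃` in `D`.

No arc leaves a gadget and `N₄` has no directed path of length two, so every directed cycle of
`D'` lies in `D`.
-/
open Sum Relation

theorem Digraph'.ext {V : Type*} {G H : Digraph' V} (h : ∀ x y, G.Adj x y ↔ H.Adj x y) :
    G = H := by
  obtain ⟨G, _, _⟩ := G
  obtain ⟨H, _, _⟩ := H
  obtain rfl : G = H := funext₂ fun x y => propext (h x y)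
  rfl

theorem Digraph'.acyclic_of_not_adj_adj {V : Type*} {G : Digraph' V}
    (h : ∀ a b c, G.Adj a b → ¬ G.Adj b c) : G.Acyclic := by
  have hpath : ∀ a b, TransGen G.Adj a b → G.Adj a b := by
    intro a b hab
    induction hab with
    | single hab => exact hab
    | tail _ hbc ih => exact (h _ _ _ ih hbc).elim
  exact fun v hv => G.loopless v (hpath v v hv)

theorem IsInducedCopy.comp {α β γ : Type*} {F : Digraph' α} {G : Digraph' β} {D : Digraph' γ}
    {φ : β → γ} {e : α → β} (hφ : IsInducedCopy G D φ) (he : IsInducedCopy F G e) :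
    IsInducedCopy F D (φ ∘ e) :=
  ⟨hφ.1.comp he.1, fun u v => (hφ.2 _ _).trans (he.2 u v)⟩

theorem exists_eq_of_not_monochromatic {α β : Type*} {c : β → Fin 2} {φ : α → β}
    (h : ¬ Monochromatic c φ) (i : Fin 2) : ∃ u, c (φ u) = i := by
  by_contra! hne
  have h_two : ∀ a b : Fin 2, b ≠ a → b = a.rev := by decide
  exact h ⟨i.rev, fun u => h_two _ _ (hne u)⟩

instance : DecidableRel V3sink.Adj := fun _ _ => by unfold V3sink; infer_instance

instance : DecidableRel N4.Adj := fun _ _ => by unfold N4; infer_instance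

theorem N4_acyclic : N4.Acyclic :=
  Digraph'.acyclic_of_not_adj_adj (by decide)

theorem isInducedCopy_V3sink_N4_succ : IsInducedCopy V3sink N4 Fin.succ :=
  ⟨Fin.succ_injective _, by decide⟩

theorem N4_not_adj_zero (j : Fin 4) : ¬ N4.Adj 0 j := by
  revert j; decide

theorem N4_adj_succ_zero (i : Fin 3) : N4.Adj i.succ 0 ↔ i = 0 := by
  revert i; decide

section AttachPlus

open Digraph'

variable {V ω : Type*} {D : Digraph' V} {O : Digraph' ω}

def Digraph'.attachPlus (D : Digraph' V) (O : Digraph' ω) : Digraph' (V ⊕ (V × ω)) where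
  Adj := attachPlusRel D O
  loopless
    | inl v => D.loopless v
    | inr (_, u) => fun h => O.loopless u h.2
  asymm
    | inl u, inl v => D.asymm u v
    | inl _, inr (_, _) => fun _ h => h
    | inr (_, _), inl _ => fun h => h.elim
    | inr (_, _), inr (_, _) => fun h h' => O.asymm _ _ h.2 h'.2

@[simp] theorem Digraph'.attachPlus_adj_inl_inl {u v : V} :
    (D.attachPlus O).Adj (inl u) (inl v) ↔ D.Adj u v := Iff.rfl

@[simp] theorem Digraph'.attachPlus_adj_inl_inr {v : V} {p : V × ω} :
    (D.attachPlus O).Adj (inl v) (inr p) ↔ v = p.1 := Iff.rfl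

@[simp] theorem Digraph'.not_attachPlus_adj_inr_inl {p : V × ω} {v : V} :
    ¬ (D.attachPlus O).Adj (inr p) (inl v) := id

@[simp] theorem Digraph'.attachPlus_adj_inr_inr {p q : V × ω} :
    (D.attachPlus O).Adj (inr p) (inr q) ↔ p.1 = q.1 ∧ O.Adj p.2 q.2 := Iff.rfl

theorem Digraph'.exists_eq_inl_of_attachPlus_adj_inl {x : V ⊕ (V × ω)} {v : V}
    (h : (D.attachPlus O).Adj x (inl v)) : ∃ u, x = inl u := by
  rcases x with u | _
  · exact ⟨u, rfl⟩
  · exact (not_attachPlus_adj_inr_inl h).elim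

theorem Digraph'.exists_eq_inr_of_attachPlus_adj_inr {p : V × ω} {y : V ⊕ (V × ω)}
    (h : (D.attachPlus O).Adj (inr p) y) : ∃ u, y = inr (p.1, u) := by
  rcases y with _ | ⟨w, u⟩
  · exact h.elim
  · exact ⟨u, by rw [h.1]⟩

theorem Digraph'.exists_eq_inr_of_attachPlus_adj_of_not_adj {x y : V ⊕ (V × ω)} {p : V × ω}
    (hx : (D.attachPlus O).Adj x (inr p)) (hy : (D.attachPlus O).Adj y (inr p)) (hxy : x ≠ y)
    (hnxy : ¬ (D.attachPlus O).Adj x y) (hnyx : ¬ (D.attachPlus O).Adj y x) :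
    ∃ u, x = inr (p.1, u) := by
  rcases x with w | ⟨w, u⟩
  · rcases y with w' | ⟨w', u'⟩
    · simp only [attachPlus_adj_inl_inr] at hx hy
      exact (hxy (by rw [hx, hy])).elim
    · simp only [attachPlus_adj_inl_inr, attachPlus_adj_inr_inr] at hx hy hnxy
      exact (hnxy (hx.trans hy.1.symm)).elim
  · exact ⟨u, by rw [hx.1]⟩

theorem Digraph'.isInducedCopy_attachPlus_inr (v : V) :
    IsInducedCopy O (D.attachPlus O) (fun u => inr (v, u)) :=
  ⟨fun _ _ h => by simpa using h, fun _ _ => by simp⟩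

theorem Digraph'.isInducedCopy_of_attachPlus_comp_inl {α : Type*} {F : Digraph' α} {ψ : α → V}
    (h : IsInducedCopy F (D.attachPlus O) (inl ∘ ψ)) : IsInducedCopy F D ψ :=
  ⟨h.1.of_comp, h.2⟩

theorem Digraph'.isInducedCopy_attachPlus_cons {ψ : Fin 3 → V} (hψ : IsInducedCopy V3sink D ψ)
    (g : ω) :
    IsInducedCopy N4 (D.attachPlus O) (Fin.cons (inr (ψ 0, g)) (inl ∘ ψ)) := by
  refine ⟨Fin.cons_injective_iff.2 ⟨by simp, inl_injective.comp hψ.1⟩, ?_⟩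
  intro a b
  cases a using Fin.cases <;> cases b using Fin.cases
  · simpa [N4_not_adj_zero] using O.loopless g
  · simpa using N4_not_adj_zero _
  · simp [N4_adj_succ_zero, hψ.1.eq_iff]
  · simpa using (hψ.2 _ _).trans (isInducedCopy_V3sink_N4_succ.2 _ _).symm

theorem IsInducedCopy.N4_attachPlus {φ : Fin 4 → V ⊕ (V × ω)}
    (hφ : IsInducedCopy N4 (D.attachPlus O) φ) :
    (∃ v, ∀ k, ∃ u, φ k = inr (v, u)) ∨
      ∃ ψ, IsInducedCopy V3sink D ψ ∧ φ ∘ Fin.succ = inl ∘ ψ := by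
  have adj : ∀ a b, N4.Adj a b → (D.attachPlus O).Adj (φ a) (φ b) := fun a b => (hφ.2 a b).2
  have not_adj : ∀ a b, ¬ N4.Adj a b → ¬ (D.attachPlus O).Adj (φ a) (φ b) :=
    fun a b h h' => h ((hφ.2 a b).1 h')
  have h10 := adj 1 0 (by decide)
  have h12 := adj 1 2 (by decide)
  have h32 := adj 3 2 (by decide)
  have n13 := not_adj 1 3 (by decide)
  have n31 := not_adj 3 1 (by decide)
  have ne13 : φ 1 ≠ φ 3 := hφ.1.ne (by decide)
  rcases h2 : φ 2 with z | ⟨v, u₂⟩ <;> rw [h2] at h12 h32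
  · obtain ⟨b, h1⟩ := exists_eq_inl_of_attachPlus_adj_inl h12
    obtain ⟨d, h3⟩ := exists_eq_inl_of_attachPlus_adj_inl h32
    have hsucc : φ ∘ Fin.succ = inl ∘ ![b, z, d] := by
      funext k; fin_cases k <;> simp [h1, h2, h3]
    have hcopy : IsInducedCopy V3sink (D.attachPlus O) (inl ∘ ![b, z, d]) :=
      hsucc ▸ hφ.comp isInducedCopy_V3sink_N4_succ
    exact .inr ⟨_, isInducedCopy_of_attachPlus_comp_inl hcopy, hsucc⟩
  · left
    obtain ⟨u₁, h1⟩ := exists_eq_inr_of_attachPlus_adj_of_not_adj h12 h32 ne13 n13 n31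
    obtain ⟨u₃, h3⟩ := exists_eq_inr_of_attachPlus_adj_of_not_adj h32 h12 ne13.symm n31 n13
    obtain ⟨u₀, h0⟩ := exists_eq_inr_of_attachPlus_adj_inr (h1 ▸ h10)
    exact ⟨v, fun k => by fin_cases k <;> exact ⟨_, ‹_›⟩⟩

theorem Digraph'.transGen_attachPlus_inr {p : V × ω} {y : V ⊕ (V × ω)}
    (h : TransGen (D.attachPlus O).Adj (inr p) y) :
    ∃ u, y = inr (p.1, u) ∧ TransGen O.Adj p.2 u := by
  induction h with
  | single h =>
    obtain ⟨u, rfl⟩ := exists_eq_inr_of_attachPlus_adj_inr h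
    exact ⟨u, rfl, .single h.2⟩
  | tail _ h ih =>
    obtain ⟨u, rfl, hu⟩ := ih
    obtain ⟨u', rfl⟩ := exists_eq_inr_of_attachPlus_adj_inr h
    exact ⟨u', rfl, hu.tail h.2⟩

theorem Digraph'.transGen_attachPlus_inl_inl {u v : V}
    (h : TransGen (D.attachPlus O).Adj (inl u) (inl v)) : TransGen D.Adj u v := by
  suffices ∀ y, TransGen (D.attachPlus O).Adj (inl u) y → ∀ v, y = inl v → TransGen D.Adj u v from
    this _ h v rfl
  intro y hy
  induction hy with
  | single h => rintro v rfl; exact .single h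
  | @tail b _ _ h ih =>
    rintro v rfl
    rcases b with b | _
    · exact (ih b rfl).tail h
    · exact (not_attachPlus_adj_inr_inl h).elim

theorem Digraph'.Acyclic.attachPlus (hD : D.Acyclic) (hO : O.Acyclic) :
    (D.attachPlus O).Acyclic
  | inl v, h => hD v (transGen_attachPlus_inl_inl h)
  | inr (_, _), h => by
    obtain ⟨u, hu, hp⟩ := transGen_attachPlus_inr h
    obtain ⟨-, rfl⟩ := Prod.mk.inj (inr_injective hu)
    exact hO _ hp

theorem Digraph'.Acyclic.of_attachPlus (h : (D.attachPlus O).Acyclic) : D.Acyclic :=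
  fun v hv => h (inl v) (hv.lift inl fun _ _ => attachPlus_adj_inl_inl.2)

theorem IsFFreeColoring.V3sink_comp_inl {c : V ⊕ (V × Fin 4) → Fin 2}
    (hc : IsFFreeColoring N4 (D.attachPlus N4) c) : IsFFreeColoring V3sink D (c ∘ inl) := by
  rintro ψ hψ ⟨i, hi⟩
  obtain ⟨g, hg⟩ :=
    exists_eq_of_not_monochromatic (hc _ (isInducedCopy_attachPlus_inr (ψ 0))) i
  exact hc _ (isInducedCopy_attachPlus_cons hψ g) ⟨i, Fin.cases hg hi⟩

theorem not_monochromatic_of_forall_eq_inr (c : V → Fin 2) {φ : Fin 4 → V ⊕ (V × Fin 4)}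
    (hφ : Function.Injective φ) {v : V} (h : ∀ k, ∃ u, φ k = inr (v, u)) :
    ¬ Monochromatic (Sum.elim c fun p => if p.2 = 0 then 0 else 1) φ := by
  choose σ hσ using h
  have hσ_surj : Function.Surjective σ :=
    Finite.injective_iff_surjective.1 fun a b hab => hφ (by rw [hσ, hσ, hab])
  obtain ⟨k₀, hk₀⟩ := hσ_surj 0
  obtain ⟨k₁, hk₁⟩ := hσ_surj 1
  rintro ⟨i, hi⟩
  have h₀ := hi k₀
  have h₁ := hi k₁
  simp only [hσ, hk₀, hk₁, elim_inr] at h₀ h₁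
  simp [← h₀] at h₁

theorem IsFFreeColoring.N4_attachPlus {c : V → Fin 2} (hc : IsFFreeColoring V3sink D c) :
    IsFFreeColoring N4 (D.attachPlus N4) (Sum.elim c fun p => if p.2 = 0 then 0 else 1) := by
  intro φ hφ
  rcases hφ.N4_attachPlus with ⟨v, hv⟩ | ⟨ψ, hψ, hφψ⟩
  · exact not_monochromatic_of_forall_eq_inr c hφ.1 hv
  · rintro ⟨i, hi⟩
    refine hc ψ hψ ⟨i, fun k => ?_⟩
    have hk : φ k.succ = inl (ψ k) := congrFun hφψ k
    simpa [hk] using hi k.succ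

end AttachPlus

theorem statement4_general {V : Type*} (D : Digraph' V)
    (D' : Digraph' (V ⊕ (V × Fin 4)))
    (hD' : ∀ x y, D'.Adj x y ↔ attachPlusRel D N4 x y) :
    ((∃ c : V → Fin 2, IsFFreeColoring V3sink D c) ↔
        (∃ c : (V ⊕ (V × Fin 4)) → Fin 2, IsFFreeColoring N4 D' c)) ∧
      (D'.Acyclic ↔ D.Acyclic) := by
  obtain rfl : D' = D.attachPlus N4 := Digraph'.ext hD'
  exact ⟨⟨fun ⟨_, hc⟩ => ⟨_, hc.N4_attachPlus⟩, fun ⟨_, hc⟩ => ⟨_, hc.V3sink_comp_inl⟩⟩,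
    Digraph'.Acyclic.of_attachPlus, fun h => h.attachPlus N4_acyclic⟩

/-- `D` admits a `V₃`-free `2`-coloring iff the digraph `D'`, obtained from `D` by attaching
to each vertex `v` a copy of `N₄` dominated by `v`, admits an `N₄`-free `2`-coloring;
moreover `D'` is acyclic iff `D` is. -/
theorem statement4 {V : Type*} [Fintype V] (D : Digraph' V)
    (D' : Digraph' (V ⊕ (V × Fin 4)))
    (hD' : ∀ x y, D'.Adj x y ↔ attachPlusRel D N4 x y) :
    ((∃ c : V → Fin 2, IsFFreeColoring V3sink D c) ↔
        (∃ c : (V ⊕ (V × Fin 4)) → Fin 2, IsFFreeColoring N4 D' c)) ∧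
      (D'.Acyclic ↔ D.Acyclic) :=
  statement4_general D D' hD'
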